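/- arXiv:1703.05685 — 5 statements merged into one kernel-verified Lean document; each statement's English description precedes it below -/
import Mathlib

section
/- Let G be a graph with a fixed linear ordering of its vertices, and let Ĝ be the graph whose vertices are the edges (u_i,u_j) of G with i<j, where (u_i,u_j) and (u_k,u_l) with j≤l are adjacent iff i=k, or j=k, or (j=l and u_i,u_k are not adjacent in G). Then there is a bijection φ from the set of clique covers of G to the set of independent sets of Ĝ such that |φ(Q)| = n − |Q| for every clique cover Q, where n = |V(G)|. -/
open Polynomial

/-- A clique cover of `G`: a partition of the vertex set into parts each inducing a clique. -/
def SimpleGraph.IsCliqueCover {V : Type*} [Fintype V] [DecidableEq V] (G : SimpleGraph V)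
    (P : Finpartition (Finset.univ : Finset V)) : Prop :=
  ∀ p ∈ P.parts, G.IsClique (p : Set V)

/-- `a_k(G)`: the number of clique covers of `G` with exactly `k` parts. -/
noncomputable def numCliqueCovers {V : Type*} [Fintype V] [DecidableEq V] (G : SimpleGraph V)
    (k : ℕ) : ℕ :=
  {P : Finpartition (Finset.univ : Finset V) | G.IsCliqueCover P ∧ P.parts.card = k}.ncard

/-- A finset of vertices is independent: pairwise non-adjacent. -/
def SimpleGraph.IsIndepFinset {W : Type*} (H : SimpleGraph W) (s : Finset W) : Prop :=
  ∀ v ∈ s, ∀ w ∈ s, ¬ H.Adj v w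

/-- `i_k(H)`: the number of independent sets of size `k` in `H`. -/
noncomputable def numIndepSets {W : Type*} (H : SimpleGraph W) (k : ℕ) : ℕ :=
  {s : Finset W | H.IsIndepFinset s ∧ s.card = k}.ncard

/-- The auxiliary one-sided relation in the construction of `Ĝ`:
for edges `e = (u_i,u_j)`, `f = (u_k,u_l)` with `j ≤ l`, they are related iff
`i = k`, or `j = k`, or (`j = l` and `u_i, u_k` non-adjacent). -/
def hatRel {n : ℕ} (G : SimpleGraph (Fin n)) (e f : Fin n × Fin n) : Prop :=
  e.2 ≤ f.2 ∧ (e.1 = f.1 ∨ e.2 = f.1 ∨ (e.2 = f.2 ∧ ¬ G.Adj e.1 f.1))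

/-- The graph `Ĝ` associated to `G` with its vertex ordering: vertices are the
edges `(u_i,u_j)` with `i < j`. -/
def hatGraph {n : ℕ} (G : SimpleGraph (Fin n)) :
    SimpleGraph {p : Fin n × Fin n // p.1 < p.2 ∧ G.Adj p.1 p.2} where
  Adj e f := e ≠ f ∧ (hatRel G e.1 f.1 ∨ hatRel G f.1 e.1)
  symm := ⟨fun e f h => ⟨h.1.symm, h.2.symm⟩⟩
  loopless := ⟨fun e h => h.1 rfl⟩

/-- The independence polynomial `I(H,x) = Σ_k (-1)^k i_k(H) x^k` (over `ℝ`). -/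
noncomputable def indepPoly {W : Type*} [Fintype W] (H : SimpleGraph W) : Polynomial ℝ :=
  ∑ k ∈ Finset.range (Fintype.card W + 1), C ((-1 : ℝ) ^ k * (numIndepSets H k : ℝ)) * X ^ k

/-- The adjoint polynomial `h(G,x) = Σ_k (-1)^{n-k} a_k(G) x^k` (over `ℝ`). -/
noncomputable def adjPoly {V : Type*} [Fintype V] [DecidableEq V] (G : SimpleGraph V) :
    Polynomial ℝ :=
  ∑ k ∈ Finset.range (Fintype.card V + 1),
    C ((-1 : ℝ) ^ (Fintype.card V - k) * (numCliqueCovers G k : ℝ)) * X ^ k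

/-- `h*(G,x) = x^n h(G,1/x) = Σ_k (-1)^k a_{n-k}(G) x^k` (over `ℝ`). -/
noncomputable def hStarPoly {V : Type*} [Fintype V] [DecidableEq V] (G : SimpleGraph V) :
    Polynomial ℝ :=
  ∑ k ∈ Finset.range (Fintype.card V + 1),
    C ((-1 : ℝ) ^ k * (numCliqueCovers G (Fintype.card V - k) : ℝ)) * X ^ k

/-- Integer version of the independence polynomial. -/
noncomputable def indepPolyZ {W : Type*} [Fintype W] (H : SimpleGraph W) : Polynomial ℤ :=
  ∑ k ∈ Finset.range (Fintype.card W + 1), C ((-1 : ℤ) ^ k * (numIndepSets H k : ℤ)) * X ^ k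

/-- Integer version of `h*`. -/
noncomputable def hStarPolyZ {V : Type*} [Fintype V] [DecidableEq V] (G : SimpleGraph V) :
    Polynomial ℤ :=
  ∑ k ∈ Finset.range (Fintype.card V + 1),
    C ((-1 : ℤ) ^ k * (numCliqueCovers G (Fintype.card V - k) : ℤ)) * X ^ k

/-- A finset of edges forming a matching in `G`. -/
def SimpleGraph.IsMatchingFinset {V : Type*} (G : SimpleGraph V) (s : Finset (Sym2 V)) : Prop :=
  (↑s : Set (Sym2 V)) ⊆ G.edgeSet ∧
    ∀ e ∈ s, ∀ f ∈ s, e ≠ f → ∀ v, ¬(v ∈ e ∧ v ∈ f)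

/-- `m_k(G)`: number of matchings of size `k`. -/
noncomputable def numMatchings {V : Type*} (G : SimpleGraph V) (k : ℕ) : ℕ :=
  {s : Finset (Sym2 V) | G.IsMatchingFinset s ∧ s.card = k}.ncard

/-- The matching polynomial `M(G,x) = Σ_k (-1)^k m_k(G) x^{n-k}` (over `ℝ`). -/
noncomputable def matchPoly {V : Type*} [Fintype V] (G : SimpleGraph V) : Polynomial ℝ :=
  ∑ k ∈ Finset.range (Fintype.card V + 1),
    C ((-1 : ℝ) ^ k * (numMatchings G k : ℝ)) * X ^ (Fintype.card V - k)

/-- The line graph `L(G)`: vertices are the edges of `G`, adjacent iff distinct and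
sharing an endpoint. -/
def lineGraph' {V : Type*} (G : SimpleGraph V) : SimpleGraph G.edgeSet where
  Adj e f := e ≠ f ∧ ∃ v, v ∈ (e : Sym2 V) ∧ v ∈ (f : Sym2 V)
  symm := ⟨fun e f h => ⟨h.1.symm, h.2.choose, h.2.choose_spec.2, h.2.choose_spec.1⟩⟩
  loopless := ⟨fun e h => h.1 rfl⟩

/-- `H ∪ K₁`: the disjoint union of `H` with one isolated vertex. -/
def addIsolated {V : Type*} (H : SimpleGraph V) : SimpleGraph (V ⊕ Unit) where
  Adj x y := ∃ a b, x = Sum.inl a ∧ y = Sum.inl b ∧ H.Adj a b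
  symm := ⟨by rintro x y ⟨a, b, rfl, rfl, h⟩; exact ⟨b, a, rfl, rfl, h.symm⟩⟩
  loopless := ⟨by rintro x ⟨a, b, rfl, h, hadj⟩; cases Sum.inl_injective h; exact hadj.ne rfl⟩

/-- `b` is the smallest zero of `p` in `(0,1]`. -/
def IsBetaZero (p : Polynomial ℝ) (b : ℝ) : Prop :=
  b ∈ Set.Ioc (0 : ℝ) 1 ∧ p.eval b = 0 ∧ ∀ y ∈ Set.Ioc (0 : ℝ) 1, p.eval y = 0 → b ≤ y

/-- `g` is the largest real zero of `p`. -/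
def IsGammaZero (p : Polynomial ℝ) (g : ℝ) : Prop :=
  p.eval g = 0 ∧ ∀ y : ℝ, p.eval y = 0 → y ≤ g

/-!
Encode a clique cover by pointing every vertex that is not the largest of its part to that
largest vertex. These pointers are exactly the independent sets of `Ĝ`: the clause `i = k` says at
most one pointer leaves each vertex, `j = k` says pointers end at vertices with no pointer of
their own, and the clause for `j = l` says two vertices pointing to the same vertex are adjacent,
so that the fibres of the pointer map are cliques. One pointer leaves each vertex of `Q` except
the largest in each part, hence `|φ(Q)| = n - |Q|`.
-/

open Finset

namespace Finpartition

variable {α : Type*} [DecidableEq α] {s : Finset α}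

lemma parts_eq_image_part (P : Finpartition s) : P.parts = s.image P.part := by
  ext t
  refine ⟨fun ht ↦ ?_, ?_⟩
  · obtain ⟨a, ha, rfl⟩ := P.part_surjOn ht
    exact mem_image_of_mem _ ha
  · intro ht
    obtain ⟨a, ha, rfl⟩ := mem_image.1 ht
    exact P.part_mem.2 ha

lemma ext_part {P Q : Finpartition s} (h : ∀ a, P.part a = Q.part a) : P = Q := by
  ext1
  rw [parts_eq_image_part, parts_eq_image_part, funext h]

end Finpartition

namespace Finpartition

variable {V : Type*} [Fintype V] [LinearOrder V] (P : Finpartition (univ : Finset V))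

noncomputable def partMax (v : V) : V :=
  (P.part v).max' ⟨v, P.mem_part (mem_univ v)⟩

lemma partMax_mem_part (v : V) : P.partMax v ∈ P.part v := max'_mem _ _

lemma le_partMax (v : V) : v ≤ P.partMax v :=
  le_max' _ _ (P.mem_part (mem_univ v))

lemma part_partMax (v : V) : P.part (P.partMax v) = P.part v :=
  P.part_eq_of_mem (P.part_mem.2 (mem_univ v)) (P.partMax_mem_part v)

lemma partMax_eq_partMax_iff {v w : V} : P.partMax v = P.partMax w ↔ P.part v = P.part w := by
  refine ⟨fun h ↦ ?_, fun h ↦ by simp only [partMax, h]⟩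
  rw [← P.part_partMax v, ← P.part_partMax w, h]

@[simp]
lemma partMax_partMax (v : V) : P.partMax (P.partMax v) = P.partMax v :=
  P.partMax_eq_partMax_iff.2 (P.part_partMax v)

lemma card_filter_partMax_eq_self : #{v | P.partMax v = v} = #P.parts := by
  refine card_nbij P.part (fun v _ ↦ P.part_mem.2 (mem_univ v)) ?_ ?_
  · intro v hv w hw h
    simp only [coe_filter, mem_univ, true_and, Set.mem_ofPred_eq] at hv hw
    rw [← hv, ← hw, P.partMax_eq_partMax_iff.2 h]
  · intro t ht
    obtain ⟨v, -, rfl⟩ := P.part_surjOn ht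
    exact ⟨P.partMax v, by simp, P.part_partMax v⟩

lemma partMax_ofSetoid_ker {r : V → V} [DecidableRel (Setoid.ker r).r] (hle : ∀ v, v ≤ r v)
    (hidem : ∀ v, r (r v) = r v) (v : V) : (ofSetoid (Setoid.ker r)).partMax v = r v := by
  have hmem : ∀ w, w ∈ (ofSetoid (Setoid.ker r)).part v ↔ r v = r w := fun w ↦
    mem_part_ofSetoid_iff_rel
  refine le_antisymm (max'_le _ _ _ fun w hw ↦ ?_) (le_max' _ _ ?_)
  · exact ((hmem w).1 hw).symm ▸ hle w
  · exact (hmem _).2 (hidem v).symm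

lemma ofSetoid_ker_partMax [DecidableRel (Setoid.ker P.partMax).r] :
    ofSetoid (Setoid.ker P.partMax) = P :=
  ext_part fun v ↦ ext fun w ↦ by
    rw [mem_part_ofSetoid_iff_rel, P.mem_part_iff_part_eq_part (mem_univ w)
      (mem_univ v), eq_comm, ← P.partMax_eq_partMax_iff]
    exact Iff.rfl

end Finpartition

namespace SimpleGraph

variable {V : Type*} [Fintype V] [LinearOrder V]

lemma isCliqueCover_iff_partMax (G : SimpleGraph V) (P : Finpartition (univ : Finset V)) :
    G.IsCliqueCover P ↔ ∀ v w, v ≠ w → P.partMax v = P.partMax w → G.Adj v w := by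
  simp only [Finpartition.partMax_eq_partMax_iff]
  constructor
  · intro hP v w hne h
    exact hP _ (P.part_mem.2 (mem_univ v)) (P.mem_part (mem_univ v))
      (h ▸ P.mem_part (mem_univ w)) hne
  · intro h t ht v hv w hw hne
    obtain ⟨a, -, rfl⟩ := P.part_surjOn ht
    refine h v w hne ?_
    rw [P.part_eq_of_mem (P.part_mem.2 (mem_univ a)) hv,
      P.part_eq_of_mem (P.part_mem.2 (mem_univ a)) hw]

lemma IsCliqueCover.adj_partMax {G : SimpleGraph V} {P : Finpartition (univ : Finset V)}
    (hP : G.IsCliqueCover P) {v : V} (hv : v ≠ P.partMax v) : G.Adj v (P.partMax v) :=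
  (G.isCliqueCover_iff_partMax P).1 hP _ _ hv (P.partMax_partMax v).symm

end SimpleGraph

namespace HatGraph

variable {n : ℕ} (G : SimpleGraph (Fin n))

abbrev OrderedEdge := {p : Fin n × Fin n // p.1 < p.2 ∧ G.Adj p.1 p.2}

variable {G}

lemma OrderedEdge.ext_fst {e f : OrderedEdge G} (h₁ : e.1.1 = f.1.1) (h₂ : e.1.2 = f.1.2) :
    e = f :=
  Subtype.ext (Prod.ext h₁ h₂)

lemma isIndepFinset_iff {s : Finset (OrderedEdge G)} :
    (hatGraph G).IsIndepFinset s ↔ ∀ e ∈ s, ∀ f ∈ s, e ≠ f → ¬ hatRel G e.1 f.1 := by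
  refine ⟨fun hs e he f hf hne h ↦ hs e he f hf ⟨hne, Or.inl h⟩, ?_⟩
  rintro hs e he f hf ⟨hne, h | h⟩
  exacts [hs e he f hf hne h, hs f hf e he hne.symm h]

variable (G) in
open Classical in
noncomputable def edgesToPartMax (P : Finpartition (univ : Finset (Fin n))) :
    Finset (OrderedEdge G) :=
  {e | e.1.2 = P.partMax e.1.1}

variable {P : Finpartition (univ : Finset (Fin n))}

@[simp]
lemma mem_edgesToPartMax {e : OrderedEdge G} :
    e ∈ edgesToPartMax G P ↔ e.1.2 = P.partMax e.1.1 := by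
  simp [edgesToPartMax]

lemma isIndepFinset_edgesToPartMax (hP : G.IsCliqueCover P) :
    (hatGraph G).IsIndepFinset (edgesToPartMax G P) := by
  refine isIndepFinset_iff.2 fun e he f hf hne ⟨_, h⟩ ↦ ?_
  rw [mem_edgesToPartMax] at he hf
  have hfst : e.1.1 ≠ f.1.1 := fun h₁ ↦ hne (OrderedEdge.ext_fst h₁ (by rw [he, hf, h₁]))
  rcases h with h₁ | h₂ | ⟨h₂, hnadj⟩
  · exact hfst h₁
  · -- `f` would start at the largest vertex of a part, so it could not go further up
    have : P.partMax f.1.1 = f.1.1 := by rw [← h₂, he, P.partMax_partMax]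
    exact f.2.1.ne (hf.trans this).symm
  · exact hnadj ((G.isCliqueCover_iff_partMax P).1 hP _ _ hfst (by rw [← he, ← hf, h₂]))

lemma card_edgesToPartMax (hP : G.IsCliqueCover P) :
    #(edgesToPartMax G P) = n - #P.parts := by
  have hsrc : #(edgesToPartMax G P) = #{v | ¬ P.partMax v = v} := by
    refine card_bij (fun e _ ↦ e.1.1) (fun e he ↦ ?_) (fun e he f hf h ↦ ?_) (fun v hv ↦ ?_)
    · rw [mem_edgesToPartMax] at he
      simpa [← he] using e.2.1.ne'
    · rw [mem_edgesToPartMax] at he hf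
      exact OrderedEdge.ext_fst h (by rw [he, hf, h])
    · have hv : v ≠ P.partMax v := Ne.symm (by simpa using hv)
      refine ⟨⟨(v, P.partMax v), (P.le_partMax v).lt_of_ne hv, hP.adj_partMax hv⟩, ?_, rfl⟩
      simp
  have hsplit := card_filter_add_card_filter_not (s := univ) (fun v ↦ P.partMax v = v)
  rw [card_univ, Fintype.card_fin, P.card_filter_partMax_eq_self] at hsplit
  omega

variable {s : Finset (OrderedEdge G)}

lemma eq_of_fst_eq (hs : (hatGraph G).IsIndepFinset s) {e f : OrderedEdge G} (he : e ∈ s)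
    (hf : f ∈ s) (h : e.1.1 = f.1.1) : e = f := by
  by_contra hne
  rcases le_total e.1.2 f.1.2 with hle | hle
  · exact isIndepFinset_iff.1 hs e he f hf hne ⟨hle, Or.inl h⟩
  · exact isIndepFinset_iff.1 hs f hf e he (Ne.symm hne) ⟨hle, Or.inl h.symm⟩

variable (s) in
noncomputable def root (v : Fin n) : Fin n :=
  if h : ∃ e ∈ s, e.1.1 = v then h.choose.1.2 else v

lemma root_fst (hs : (hatGraph G).IsIndepFinset s) {e : OrderedEdge G} (he : e ∈ s) :
    root s e.1.1 = e.1.2 := by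
  have h : ∃ f ∈ s, f.1.1 = e.1.1 := ⟨e, he, rfl⟩
  rw [root, dif_pos h, eq_of_fst_eq hs h.choose_spec.1 he h.choose_spec.2]

lemma exists_mem_of_root_ne {v : Fin n} (h : root s v ≠ v) :
    ∃ e ∈ s, e.1.1 = v ∧ e.1.2 = root s v := by
  by_cases hex : ∃ e ∈ s, e.1.1 = v
  · exact ⟨hex.choose, hex.choose_spec.1, hex.choose_spec.2, by rw [root, dif_pos hex]⟩
  · exact absurd (by rw [root, dif_neg hex]) h

lemma le_root (v : Fin n) : v ≤ root s v := by
  by_cases h : root s v = v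
  · exact h.ge
  · obtain ⟨e, -, rfl, he⟩ := exists_mem_of_root_ne h
    exact he ▸ e.2.1.le

lemma adj_root {v : Fin n} (h : root s v ≠ v) : G.Adj v (root s v) := by
  obtain ⟨e, -, rfl, he⟩ := exists_mem_of_root_ne h
  exact he ▸ e.2.2

lemma root_root (hs : (hatGraph G).IsIndepFinset s) (v : Fin n) :
    root s (root s v) = root s v := by
  by_contra h₂
  have h₁ : root s v ≠ v := fun h ↦ h₂ (by rw [h, h])
  obtain ⟨e, he, rfl, he₂⟩ := exists_mem_of_root_ne h₁
  obtain ⟨f, hf, hf₁, -⟩ := exists_mem_of_root_ne h₂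
  have hne : e ≠ f := fun h ↦ h₁ (by rw [← hf₁, h])
  have h₂₁ : e.1.2 = f.1.1 := he₂.trans hf₁.symm
  exact isIndepFinset_iff.1 hs e he f hf hne ⟨h₂₁ ▸ f.2.1.le, Or.inr (Or.inl h₂₁)⟩

variable (s) in
open scoped Classical in
noncomputable def cliqueCoverOf : Finpartition (univ : Finset (Fin n)) :=
  Finpartition.ofSetoid (Setoid.ker (root s))

open scoped Classical in
lemma partMax_cliqueCoverOf (hs : (hatGraph G).IsIndepFinset s) :
    (cliqueCoverOf s).partMax = root s :=
  funext (Finpartition.partMax_ofSetoid_ker le_root (root_root hs))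

lemma adj_of_root_eq (hs : (hatGraph G).IsIndepFinset s) {v w : Fin n} (hne : v ≠ w)
    (h : root s v = root s w) : G.Adj v w := by
  by_cases hv : root s v = v
  · have hw : root s w ≠ w := fun hw ↦ hne (by rw [← hv, h, hw])
    have := adj_root hw
    rw [← h, hv] at this
    exact this.symm
  by_cases hw : root s w = w
  · have := adj_root hv
    rwa [h, hw] at this
  obtain ⟨e, he, rfl, he₂⟩ := exists_mem_of_root_ne hv
  obtain ⟨f, hf, rfl, hf₂⟩ := exists_mem_of_root_ne hw
  have hef : e ≠ f := fun h ↦ hne (by rw [h])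
  have h₂ : e.1.2 = f.1.2 := by rw [he₂, hf₂, h]
  by_contra hadj
  exact isIndepFinset_iff.1 hs e he f hf hef ⟨h₂.le, Or.inr (Or.inr ⟨h₂, hadj⟩)⟩

lemma isCliqueCover_cliqueCoverOf (hs : (hatGraph G).IsIndepFinset s) :
    G.IsCliqueCover (cliqueCoverOf s) := by
  rw [SimpleGraph.isCliqueCover_iff_partMax, partMax_cliqueCoverOf hs]
  exact fun v w ↦ adj_of_root_eq hs

lemma edgesToPartMax_cliqueCoverOf (hs : (hatGraph G).IsIndepFinset s) :
    edgesToPartMax G (cliqueCoverOf s) = s := by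
  ext e
  rw [mem_edgesToPartMax, partMax_cliqueCoverOf hs]
  refine ⟨fun h ↦ ?_, fun he ↦ (root_fst hs he).symm⟩
  obtain ⟨f, hf, hf₁, hf₂⟩ := exists_mem_of_root_ne (h ▸ e.2.1.ne')
  rwa [OrderedEdge.ext_fst hf₁.symm (h.trans hf₂.symm)]

lemma root_edgesToPartMax (hP : G.IsCliqueCover P) :
    root (edgesToPartMax G P) = P.partMax := by
  funext v
  by_cases hv : root (edgesToPartMax G P) v = v
  · by_contra hne
    have hv' : v ≠ P.partMax v := fun h ↦ hne (hv.trans h)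
    let e : OrderedEdge G :=
      ⟨(v, P.partMax v), (P.le_partMax v).lt_of_ne hv', hP.adj_partMax hv'⟩
    exact hne (root_fst (isIndepFinset_edgesToPartMax hP) (e := e) (by simp [e]))
  · obtain ⟨e, he, rfl, he₂⟩ := exists_mem_of_root_ne hv
    exact he₂.symm.trans (mem_edgesToPartMax.1 he)

lemma cliqueCoverOf_edgesToPartMax (hP : G.IsCliqueCover P) :
    cliqueCoverOf (edgesToPartMax G P) = P := by
  classical
  rw [cliqueCoverOf]
  simp_rw [root_edgesToPartMax hP]
  exact P.ofSetoid_ker_partMax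

end HatGraph

open HatGraph

/-- there is a bijection `φ` from the clique covers of `G` to the
independent sets of `Ĝ` with `|φ(Q)| = n - |Q|`. -/
theorem stmt2 {n : ℕ} (G : SimpleGraph (Fin n)) :
    ∃ φ : {P : Finpartition (Finset.univ : Finset (Fin n)) // G.IsCliqueCover P} ≃
          {s : Finset {p : Fin n × Fin n // p.1 < p.2 ∧ G.Adj p.1 p.2} //
            (hatGraph G).IsIndepFinset s},
      ∀ Q, (φ Q).1.card = n - Q.1.parts.card :=
  ⟨{ toFun := fun P ↦ ⟨edgesToPartMax G P, isIndepFinset_edgesToPartMax P.2⟩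
     invFun := fun s ↦ ⟨cliqueCoverOf s.1, isCliqueCover_cliqueCoverOf s.2⟩
     left_inv := fun P ↦ Subtype.ext (cliqueCoverOf_edgesToPartMax P.2)
     right_inv := fun s ↦ Subtype.ext (edgesToPartMax_cliqueCoverOf s.2) },
   fun Q ↦ card_edgesToPartMax Q.2⟩
end

section
/- Let G be a graph with vertices ordered u_1,…,u_n and suppose e = (u_{n-1}, u_n) is an edge of G. Then the graph constructed from G − e (with the induced vertex ordering) is a subgraph of the graph Ĝ constructed from G. -/
open Polynomial

/- An edge `(u_i, u_j)` with `i < j` never starts at the last vertex, so deleting the edge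
`u_{n-1} u_n` changes no adjacency between first endpoints; this is the only place where the
non-adjacency clause of `hatRel` could tell `G` and `G - e` apart. -/

theorem hatRel_mono {m : ℕ} {H G : SimpleGraph (Fin m)} {e f : Fin m × Fin m}
    (hfirst : G.Adj e.1 f.1 → H.Adj e.1 f.1) (h : hatRel H e f) : hatRel G e f := by
  obtain ⟨hle, hsame | hchain | ⟨hlast, hnadj⟩⟩ := h
  · exact ⟨hle, Or.inl hsame⟩
  · exact ⟨hle, Or.inr (Or.inl hchain)⟩
  · exact ⟨hle, Or.inr (Or.inr ⟨hlast, mt hfirst hnadj⟩)⟩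

theorem hatGraph_adj_of_le {m : ℕ} {H G : SimpleGraph (Fin m)} (hHG : H ≤ G)
    {p q : Fin m × Fin m} (hp : p.1 < p.2 ∧ H.Adj p.1 p.2) (hq : q.1 < q.2 ∧ H.Adj q.1 q.2)
    (hfirst : G.Adj p.1 q.1 → H.Adj p.1 q.1) (hadj : (hatGraph H).Adj ⟨p, hp⟩ ⟨q, hq⟩) :
    (hatGraph G).Adj ⟨p, hp.1, hHG hp.2⟩ ⟨q, hq.1, hHG hq.2⟩ := by
  obtain ⟨hne, hrel⟩ := hadj
  have hpq : p ≠ q := fun h => hne (Subtype.ext h)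
  refine ⟨fun h => hpq (congrArg Subtype.val h), ?_⟩
  rcases hrel with hrel | hrel
  · exact Or.inl (hatRel_mono hfirst hrel)
  · exact Or.inr (hatRel_mono (fun h => (hfirst h.symm).symm) hrel)

theorem SimpleGraph.deleteEdges_adj_of_ne_right {V : Type*} {G : SimpleGraph V} {u v a b : V}
    (ha : a ≠ v) (hb : b ≠ v) (h : G.Adj a b) : (G.deleteEdges {s(u, v)}).Adj a b := by
  refine (deleteEdges_adj).2 ⟨h, ?_⟩
  simp only [Set.mem_singleton_iff, Sym2.eq_iff, not_or, not_and]
  exact ⟨fun _ => hb, fun h' _ => ha h'⟩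

theorem stmt5_general {n : ℕ} (G : SimpleGraph (Fin (n + 2)))
    (p q : Fin (n + 2) × Fin (n + 2))
    (hp : p.1 < p.2 ∧
      (G.deleteEdges {s((Fin.last n).castSucc, Fin.last (n + 1))}).Adj p.1 p.2)
    (hq : q.1 < q.2 ∧
      (G.deleteEdges {s((Fin.last n).castSucc, Fin.last (n + 1))}).Adj q.1 q.2)
    (hadj : (hatGraph (G.deleteEdges {s((Fin.last n).castSucc, Fin.last (n + 1))})).Adj
      ⟨p, hp⟩ ⟨q, hq⟩) :
    (hatGraph G).Adj
      ⟨p, hp.1, (SimpleGraph.deleteEdges_adj.mp hp.2).1⟩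
      ⟨q, hq.1, (SimpleGraph.deleteEdges_adj.mp hq.2).1⟩ :=
  hatGraph_adj_of_le (G.deleteEdges_le _) hp hq
    (SimpleGraph.deleteEdges_adj_of_ne_right (Fin.ne_last_of_lt hp.1) (Fin.ne_last_of_lt hq.1))
    hadj

/-- if `e` is the edge between the last two vertices of `G`, then the graph
constructed from `G - e` is a subgraph of the graph `Ĝ` constructed from `G`. -/
theorem stmt5 {n : ℕ} (G : SimpleGraph (Fin (n + 2)))
    (he : G.Adj (Fin.last n).castSucc (Fin.last (n + 1)))
    (p q : Fin (n + 2) × Fin (n + 2))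
    (hp : p.1 < p.2 ∧
      (G.deleteEdges {s((Fin.last n).castSucc, Fin.last (n + 1))}).Adj p.1 p.2)
    (hq : q.1 < q.2 ∧
      (G.deleteEdges {s((Fin.last n).castSucc, Fin.last (n + 1))}).Adj q.1 q.2)
    (hadj : (hatGraph (G.deleteEdges {s((Fin.last n).castSucc, Fin.last (n + 1))})).Adj
      ⟨p, hp⟩ ⟨q, hq⟩) :
    (hatGraph G).Adj
      ⟨p, hp.1, (SimpleGraph.deleteEdges_adj.mp hp.2).1⟩
      ⟨q, hq.1, (SimpleGraph.deleteEdges_adj.mp hq.2).1⟩ :=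
  stmt5_general G p q hp hq hadj
end

section
/- For any finite simple graph G on n vertices, the coefficient of x^k in h(G,x) times (−1)^{n−k} equals the number of independent sets of size n−k in Ĝ; equivalently h*(G,x) = I(Ĝ,x) where h*(G,x) = Σ_{k≥0} (−1)^k a_{n−k}(G) x^k. -/
open Polynomial

set_option maxHeartbeats 1000000

section AuxDev

variable {n : ℕ} (G : SimpleGraph (Fin n)) [DecidableRel G.Adj]

abbrev HatV (G : SimpleGraph (Fin n)) : Type := {p : Fin n × Fin n // p.1 < p.2 ∧ G.Adj p.1 p.2}

variable {S : Finset (HatV G)}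

lemma indep_fst_inj (hS : (hatGraph G).IsIndepFinset S) {e f : HatV G} (he : e ∈ S)
    (hf : f ∈ S) (h : e.1.1 = f.1.1) : e = f := by
  by_contra hne
  rcases le_total e.1.2 f.1.2 with h2 | h2
  · exact hS e he f hf ⟨hne, Or.inl ⟨h2, Or.inl h⟩⟩
  · exact hS f hf e he ⟨Ne.symm hne, Or.inl ⟨h2, Or.inl h.symm⟩⟩

lemma indep_snd_ne_fst (hS : (hatGraph G).IsIndepFinset S) {e f : HatV G} (he : e ∈ S)
    (hf : f ∈ S) : e.1.2 ≠ f.1.1 := by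
  intro h
  by_cases hef : e = f
  · subst hef; exact absurd h (ne_of_gt e.2.1)
  · exact hS e he f hf ⟨hef, Or.inl ⟨h ▸ le_of_lt f.2.1, Or.inr (Or.inl h)⟩⟩

lemma indep_adj_of_snd_eq (hS : (hatGraph G).IsIndepFinset S) {e f : HatV G} (he : e ∈ S)
    (hf : f ∈ S) (hne : e ≠ f) (h : e.1.2 = f.1.2) : G.Adj e.1.1 f.1.1 := by
  by_contra hadj
  exact hS e he f hf ⟨hne, Or.inl ⟨le_of_eq h, Or.inr (Or.inr ⟨h, hadj⟩)⟩⟩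

lemma indep_of
    (H : ∀ e ∈ S, ∀ f ∈ S, e ≠ f → e.1.1 ≠ f.1.1 ∧ e.1.2 ≠ f.1.1 ∧
      (e.1.2 = f.1.2 → G.Adj e.1.1 f.1.1)) : (hatGraph G).IsIndepFinset S := by
  have key : ∀ a ∈ S, ∀ b ∈ S, a ≠ b → ¬ hatRel G a.1 b.1 := by
    rintro a ha b hb hab ⟨h2, hor⟩
    obtain ⟨h11, h21, hsnd⟩ := H a ha b hb hab
    rcases hor with h | h | ⟨hsnd2, hnadj⟩
    · exact h11 h
    · exact h21 h
    · exact hnadj (hsnd hsnd2)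
  rintro e he f hf ⟨hne, hrel | hrel⟩
  · exact key e he f hf hne hrel
  · exact key f hf e he (Ne.symm hne) hrel

end AuxDev

section Aux

variable {n : ℕ} (G : SimpleGraph (Fin n)) [DecidableRel G.Adj]

variable {S : Finset (HatV G)}

def toEdges (P : Finpartition (Finset.univ : Finset (Fin n))) : Finset (HatV G) :=
  Finset.univ.filter (fun e => ∃ p ∈ P.parts, e.1.1 ∈ p ∧ e.1.2 ∈ p ∧ ∀ v ∈ p, v ≤ e.1.2)

lemma mem_toEdges {P : Finpartition (Finset.univ : Finset (Fin n))} {e : HatV G} :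
    e ∈ toEdges G P ↔ ∃ p ∈ P.parts, e.1.1 ∈ p ∧ e.1.2 ∈ p ∧ ∀ v ∈ p, v ≤ e.1.2 := by
  simp [toEdges]

def firstsOf (S : Finset (HatV G)) : Finset (Fin n) := S.image (fun e => e.1.1)

def partAt (S : Finset (HatV G)) (t : Fin n) : Finset (Fin n) :=
  insert t ((S.filter (fun e => e.1.2 = t)).image (fun e => e.1.1))

lemma mem_partAt {S : Finset (HatV G)} {t v : Fin n} :
    v ∈ partAt G S t ↔ v = t ∨ ∃ e ∈ S, e.1.1 = v ∧ e.1.2 = t := by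
  simp only [partAt, Finset.mem_insert, Finset.mem_image, Finset.mem_filter]
  tauto

def toPartition (S : Finset (HatV G)) (hS : (hatGraph G).IsIndepFinset S) :
    Finpartition (Finset.univ : Finset (Fin n)) where
  parts := (Finset.univ \ firstsOf G S).image (partAt G S)
  supIndep := by
    rw [Finset.supIndep_iff_pairwiseDisjoint]
    rintro p hp q hq hpq
    simp only [Finset.coe_image, Set.mem_image, Finset.mem_coe, Finset.mem_sdiff] at hp hq
    obtain ⟨t, ⟨-, ht⟩, rfl⟩ := hp
    obtain ⟨t', ⟨-, ht'⟩, rfl⟩ := hq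
    simp only [Function.onFun, id_eq, Finset.disjoint_left]
    intro v hv hv'
    rw [mem_partAt] at hv hv'
    apply hpq
    rcases hv with rfl | ⟨e, he, he1, he2⟩
    · rcases hv' with rfl | ⟨f, hf, hf1, hf2⟩
      · rfl
      · have : f.1.1 ∈ firstsOf G S := Finset.mem_image_of_mem (fun e => e.1.1) hf
        rw [hf1] at this
        exact absurd this ht
    · rcases hv' with rfl | ⟨f, hf, hf1, hf2⟩
      · have : e.1.1 ∈ firstsOf G S := Finset.mem_image_of_mem (fun e => e.1.1) he
        rw [he1] at this
        exact absurd this ht'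
      · have : e = f := indep_fst_inj G hS he hf (he1.trans hf1.symm)
        rw [← he2, this, hf2]
  sup_parts := by
    apply le_antisymm (Finset.sup_le fun p _ => Finset.subset_univ p)
    intro v _
    rw [Finset.mem_sup]
    by_cases hv : v ∈ firstsOf G S
    · obtain ⟨e, he, he1⟩ := Finset.mem_image.1 hv
      refine ⟨partAt G S e.1.2, Finset.mem_image_of_mem _ ?_, ?_⟩
      · rw [Finset.mem_sdiff]
        refine ⟨Finset.mem_univ _, fun h => ?_⟩
        obtain ⟨f, hf, hf1⟩ := Finset.mem_image.1 h
        exact indep_snd_ne_fst G hS he hf hf1.symm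
      · exact (mem_partAt G).2 (Or.inr ⟨e, he, he1, rfl⟩)
    · exact ⟨partAt G S v, Finset.mem_image_of_mem _ (Finset.mem_sdiff.2 ⟨Finset.mem_univ _, hv⟩),
        (mem_partAt G).2 (Or.inl rfl)⟩
  bot_notMem := by
    intro h
    obtain ⟨t, -, ht⟩ := Finset.mem_image.1 h
    have : t ∈ partAt G S t := (mem_partAt G).2 (Or.inl rfl)
    rw [ht] at this
    exact absurd this (Finset.notMem_empty t)

lemma mem_parts_toPartition {S : Finset (HatV G)} {hS : (hatGraph G).IsIndepFinset S}
    {p : Finset (Fin n)} :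
    p ∈ (toPartition G S hS).parts ↔ ∃ t, t ∉ firstsOf G S ∧ partAt G S t = p := by
  simp [toPartition]

lemma toPartition_isCliqueCover (S : Finset (HatV G)) (hS : (hatGraph G).IsIndepFinset S) :
    G.IsCliqueCover (toPartition G S hS) := by
  intro p hp
  obtain ⟨t, ht, rfl⟩ := (mem_parts_toPartition G).1 hp
  rw [SimpleGraph.isClique_iff]
  intro v hv w hw hvw
  rw [Finset.mem_coe, mem_partAt] at hv hw
  rcases hv with rfl | ⟨e, he, he1, he2⟩
  · rcases hw with rfl | ⟨f, hf, hf1, hf2⟩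
    · exact absurd rfl hvw
    · rw [← hf1, ← hf2]; exact f.2.2.symm
  · rcases hw with rfl | ⟨f, hf, hf1, hf2⟩
    · rw [← he1, ← he2]; exact e.2.2
    · have hne : e ≠ f := fun h => hvw (he1.symm.trans (h ▸ hf1))
      rw [← he1, ← hf1]
      exact indep_adj_of_snd_eq G hS he hf hne (he2.trans hf2.symm)

lemma card_firstsOf (hS : (hatGraph G).IsIndepFinset S) : (firstsOf G S).card = S.card :=
  Finset.card_image_of_injOn (fun e he f hf h => indep_fst_inj G hS he hf h)

lemma card_indep_le (hS : (hatGraph G).IsIndepFinset S) : S.card ≤ n := by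
  rw [← card_firstsOf G hS]
  simpa using (Finset.card_le_univ (firstsOf G S))

lemma parts_card_toPartition (S : Finset (HatV G)) (hS : (hatGraph G).IsIndepFinset S) :
    (toPartition G S hS).parts.card = n - S.card := by
  show ((Finset.univ \ firstsOf G S).image (partAt G S)).card = n - S.card
  rw [Finset.card_image_of_injOn, Finset.card_sdiff_of_subset (Finset.subset_univ _), Finset.card_univ,
    Fintype.card_fin, card_firstsOf G hS]
  intro t ht t' ht' h
  rw [Finset.coe_sdiff, Set.mem_diff] at ht ht'
  have : t ∈ partAt G S t' := h ▸ (mem_partAt G).2 (Or.inl rfl)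
  rcases (mem_partAt G).1 this with h' | ⟨e, he, he1, he2⟩
  · exact h'
  · have : e.1.1 ∈ firstsOf G S := Finset.mem_image_of_mem (fun e => e.1.1) he
    rw [he1] at this
    exact absurd this ht.2

end Aux

section Inverses

variable {n : ℕ} (G : SimpleGraph (Fin n)) [DecidableRel G.Adj]

lemma toEdges_toPartition (S : Finset (HatV G)) (hS : (hatGraph G).IsIndepFinset S) :
    toEdges G (toPartition G S hS) = S := by
  ext e
  rw [mem_toEdges]
  constructor
  · rintro ⟨p, hp, h1, h2, hmax⟩
    obtain ⟨t, ht, rfl⟩ := (mem_parts_toPartition G).1 hp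
    have htle : t ≤ e.1.2 := hmax t ((mem_partAt G).2 (Or.inl rfl))
    rcases (mem_partAt G).1 h1 with h1' | ⟨f, hf, hf1, hf2⟩
    · rcases (mem_partAt G).1 h2 with h2' | ⟨g, hg, hg1, hg2⟩
      · exact absurd (h2'.trans h1'.symm) (ne_of_gt e.2.1)
      · exact absurd rfl (ne_of_lt (lt_of_lt_of_le (hg2 ▸ g.2.1) (hg1 ▸ htle)))
    · rcases (mem_partAt G).1 h2 with h2' | ⟨g, hg, hg1, hg2⟩
      · have : e = f := Subtype.ext (Prod.ext hf1.symm (h2'.trans hf2.symm))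
        rw [this]; exact hf
      · exact absurd rfl (ne_of_lt (lt_of_lt_of_le (hg2 ▸ g.2.1) (hg1 ▸ htle)))
  · intro he
    refine ⟨partAt G S e.1.2, (mem_parts_toPartition G).2 ⟨e.1.2, ?_, rfl⟩, ?_, ?_, ?_⟩
    · intro h
      obtain ⟨f, hf, hf1⟩ := Finset.mem_image.1 h
      exact indep_snd_ne_fst G hS he hf hf1.symm
    · exact (mem_partAt G).2 (Or.inr ⟨e, he, rfl, rfl⟩)
    · exact (mem_partAt G).2 (Or.inl rfl)
    · intro v hv
      rcases (mem_partAt G).1 hv with rfl | ⟨f, hf, hf1, hf2⟩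
      · exact le_refl _
      · exact le_of_lt (hf1 ▸ hf2 ▸ f.2.1)

variable {P : Finpartition (Finset.univ : Finset (Fin n))}

lemma toEdges_indep (hP : G.IsCliqueCover P) :
    (hatGraph G).IsIndepFinset (toEdges G P) := by
  apply indep_of
  intro e he f hf hne
  rw [mem_toEdges] at he hf
  obtain ⟨p, hp, he1, he2, hemax⟩ := he
  obtain ⟨q, hq, hf1, hf2, hfmax⟩ := hf
  have eqparts : ∀ a : Fin n, a ∈ p → a ∈ q → p = q := fun a h1 h2 =>
    P.eq_of_mem_parts hp hq h1 h2
  have key : e.1.1 = f.1.1 → e = f := by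
    intro h
    have hpq : p = q := eqparts e.1.1 he1 (h ▸ hf1)
    subst hpq
    have h2 : e.1.2 = f.1.2 := le_antisymm (hfmax _ he2) (hemax _ hf2)
    exact Subtype.ext (Prod.ext h h2)
  refine ⟨fun h => hne (key h), ?_, ?_⟩
  · intro h
    have hpq : p = q := eqparts e.1.2 he2 (h ▸ hf1)
    subst hpq
    have := hemax _ hf2
    have := f.2.1
    have := h ▸ this
    exact absurd (hemax _ hf2) (not_le_of_gt (h ▸ f.2.1))
  · intro h
    have hpq : p = q := eqparts e.1.2 he2 (h ▸ hf2)
    subst hpq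
    have hne1 : e.1.1 ≠ f.1.1 := fun h' => hne (key h')
    exact hP p hp he1 hf1 hne1

lemma max_of_not_mem_firsts (hP : G.IsCliqueCover P) {t : Fin n} {p : Finset (Fin n)}
    (ht : t ∉ firstsOf G (toEdges G P)) (hp : p ∈ P.parts) (htp : t ∈ p) :
    ∀ w ∈ p, w ≤ t := by
  intro w hw
  by_contra hwt
  push_neg at hwt
  have hne : p.Nonempty := ⟨w, hw⟩
  set m := p.max' hne with hm
  have htm : t < m := lt_of_lt_of_le hwt (p.le_max' w hw)
  have hadj : G.Adj t m := hP p hp htp (p.max'_mem hne) (ne_of_lt htm)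
  have : (⟨(t, m), htm, hadj⟩ : HatV G) ∈ toEdges G P :=
    (mem_toEdges G).2 ⟨p, hp, htp, p.max'_mem hne, fun v hv => p.le_max' v hv⟩
  exact ht (Finset.mem_image_of_mem (fun e => e.1.1) this)

lemma partAt_eq_of_max (hP : G.IsCliqueCover P) {t : Fin n} {p : Finset (Fin n)}
    (hp : p ∈ P.parts) (htp : t ∈ p) (hmax : ∀ w ∈ p, w ≤ t) :
    partAt G (toEdges G P) t = p := by
  apply Finset.Subset.antisymm
  · intro v hv
    rcases (mem_partAt G).1 hv with rfl | ⟨e, he, he1, he2⟩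
    · exact htp
    · obtain ⟨q, hq, h1, h2, -⟩ := (mem_toEdges G).1 he
      have : q = p := P.eq_of_mem_parts hq hp (he2 ▸ h2) htp
      exact he1 ▸ this ▸ h1
  · intro w hw
    rcases eq_or_ne w t with rfl | hwt
    · exact (mem_partAt G).2 (Or.inl rfl)
    · have hlt : w < t := lt_of_le_of_ne (hmax w hw) hwt
      have hadj : G.Adj w t := hP p hp hw htp hwt
      exact (mem_partAt G).2 (Or.inr ⟨⟨(w, t), hlt, hadj⟩,
        (mem_toEdges G).2 ⟨p, hp, hw, htp, hmax⟩, rfl, rfl⟩)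

lemma not_mem_firsts_of_max (hP : G.IsCliqueCover P) {t : Fin n} {p : Finset (Fin n)}
    (hp : p ∈ P.parts) (htp : t ∈ p) (hmax : ∀ w ∈ p, w ≤ t) :
    t ∉ firstsOf G (toEdges G P) := by
  intro h
  obtain ⟨e, he, he1⟩ := Finset.mem_image.1 h
  obtain ⟨q, hq, h1, h2, hqmax⟩ := (mem_toEdges G).1 he
  have : q = p := P.eq_of_mem_parts hq hp (he1 ▸ h1) htp
  subst this
  exact absurd (hmax _ h2) (not_le_of_gt (he1 ▸ e.2.1))

lemma toPartition_toEdges (hP : G.IsCliqueCover P) :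
    toPartition G (toEdges G P) (toEdges_indep G hP) = P := by
  ext p
  rw [mem_parts_toPartition]
  constructor
  · rintro ⟨t, ht, rfl⟩
    obtain ⟨q, hq, htq⟩ := P.exists_mem (Finset.mem_univ t)
    have hmax := max_of_not_mem_firsts G hP ht hq htq
    rw [partAt_eq_of_max G hP hq htq hmax]
    exact hq
  · intro hp
    have hne : p.Nonempty := P.nonempty_of_mem_parts hp
    refine ⟨p.max' hne, not_mem_firsts_of_max G hP hp (p.max'_mem hne)
      (fun w hw => p.le_max' w hw), partAt_eq_of_max G hP hp (p.max'_mem hne)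
      (fun w hw => p.le_max' w hw)⟩

end Inverses

section Count

variable {n : ℕ} (G : SimpleGraph (Fin n)) [DecidableRel G.Adj]

lemma toPartition_congr {S S' : Finset (HatV G)} (h : S = S')
    (h1 : (hatGraph G).IsIndepFinset S) (h2 : (hatGraph G).IsIndepFinset S') :
    toPartition G S h1 = toPartition G S' h2 := by subst h; rfl

lemma count_eq {k : ℕ} (hk : k ≤ n) :
    numCliqueCovers G (n - k) = numIndepSets (hatGraph G) k := by
  have himg : toEdges G '' {P : Finpartition (Finset.univ : Finset (Fin n)) |
      G.IsCliqueCover P ∧ P.parts.card = n - k} =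
      {s : Finset (HatV G) | (hatGraph G).IsIndepFinset s ∧ s.card = k} := by
    ext S
    constructor
    · rintro ⟨P, ⟨hP, hcard⟩, rfl⟩
      have hind := toEdges_indep G hP
      refine ⟨hind, ?_⟩
      have h1 := toPartition_toEdges G hP
      have h2 := parts_card_toPartition G (toEdges G P) hind
      rw [h1, hcard] at h2
      have h3 := card_indep_le G hind
      omega
    · rintro ⟨hS, hcard⟩
      exact ⟨toPartition G S hS, ⟨toPartition_isCliqueCover G S hS,
        by rw [parts_card_toPartition, hcard]⟩, toEdges_toPartition G S hS⟩
  have hinj : Set.InjOn (toEdges G) {P : Finpartition (Finset.univ : Finset (Fin n)) |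
      G.IsCliqueCover P ∧ P.parts.card = n - k} := by
    intro P hP Q hQ h
    rw [← toPartition_toEdges G hP.1, ← toPartition_toEdges G hQ.1]
    exact toPartition_congr G h _ _
  unfold numCliqueCovers numIndepSets
  rw [← himg, Set.ncard_image_of_injOn hinj]

lemma numIndep_zero_of_gt {k : ℕ} (hk : n < k) : numIndepSets (hatGraph G) k = 0 := by
  have : {s : Finset (HatV G) | (hatGraph G).IsIndepFinset s ∧ s.card = k} = ∅ := by
    ext S
    simp only [Set.mem_setOf_eq, Set.mem_empty_iff_false, iff_false, not_and]
    intro hS hcard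
    exact absurd (card_indep_le G hS) (by omega)
  rw [numIndepSets, this, Set.ncard_empty]

lemma numIndep_zero_of_gt_card {W : Type*} [Fintype W] (H : SimpleGraph W) {k : ℕ}
    (hk : Fintype.card W < k) : numIndepSets H k = 0 := by
  have : {s : Finset W | H.IsIndepFinset s ∧ s.card = k} = ∅ := by
    ext S
    simp only [Set.mem_setOf_eq, Set.mem_empty_iff_false, iff_false, not_and]
    intro _ hcard
    have := Finset.card_le_univ S
    omega
  rw [numIndepSets, this, Set.ncard_empty]

lemma coeff_sum_form (N : ℕ) (a : ℕ → ℝ) (d : ℕ) :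
    (∑ k ∈ Finset.range (N + 1), Polynomial.C (a k) * Polynomial.X ^ k).coeff d =
      if d ≤ N then a d else 0 := by
  rw [Polynomial.finset_sum_coeff]
  simp only [Polynomial.coeff_C_mul, Polynomial.coeff_X_pow, mul_ite, mul_one, mul_zero]
  rw [Finset.sum_ite_eq (Finset.range (N + 1)) d a]
  simp [Nat.lt_succ_iff]

end Count

/-- `h(G,x) = x^n I(Ĝ,1/x)`, equivalently `h*(G,x) = I(Ĝ,x)` as
polynomials. -/
theorem stmt6 {n : ℕ} (G : SimpleGraph (Fin n)) [DecidableRel G.Adj] :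
    hStarPoly G = indepPoly (hatGraph G) := by
  apply Polynomial.ext
  intro d
  rw [hStarPoly, indepPoly, coeff_sum_form, coeff_sum_form]
  simp only [Fintype.card_fin]
  split_ifs with h1 h2 h2
  · rw [count_eq G h1]
  · rw [count_eq G h1, numIndep_zero_of_gt_card (hatGraph G) (by omega)]
    simp
  · rw [numIndep_zero_of_gt G (by omega)]
    simp
  · rfl
end

section
/- Let G be a connected graph. Then the independence polynomial I(G,x) has a zero in the real interval (0,1]. -/
open Polynomial

/-!
Write `F_A(x) = Σ (-x)^|S|` over the independent subsets `S` of a vertex set `A`, so that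
`I(G,x) = F_V(x)`. Deleting a vertex `v ∈ A` gives `F_A = F_{A-v} - x F_N`, where `N` is the set of
non-neighbours of `v` in `A - v`. By induction on `A`, positivity of `F_A` on `[0,t]` passes to
`F_B` for every `B ⊆ A`: at the first zero `s` of `F_{A-v}` in `[0,t]` the set `N ⊆ A - v` still has
`F_N(s) ≥ 0`, so `F_A(s) = -s F_N(s) ≤ 0`. Since `F_{{v}}(x) = 1 - x` vanishes at `1`, `F_V` cannot
be positive on all of `[0,1]`, and as `F_V(0) = 1` it has a zero in `(0,1]`.
-/

section FirstZero

open Set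

variable {f : ℝ → ℝ}

theorem nonneg_of_pos_on_Ico (hf : Continuous f) {a b : ℝ} (hab : a < b)
    (h : ∀ y ∈ Ico a b, 0 < f y) : 0 ≤ f b := by
  have hsub : closure (Ico a b) ⊆ {y | 0 ≤ f y} :=
    closure_minimal (fun y hy => (h y hy).le) (isClosed_le continuous_const hf)
  rw [closure_Ico hab.ne] at hsub
  exact hsub ⟨hab.le, le_rfl⟩

theorem exists_first_zero (hf : Continuous f) {a b : ℝ} (hab : a ≤ b) (ha : 0 < f a)
    (hb : f b ≤ 0) : ∃ s ∈ Ioc a b, f s = 0 ∧ ∀ y ∈ Ico a s, 0 < f y := by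
  set Z := Icc a b ∩ {x | f x ≤ 0}
  have hZ : IsClosed Z := isClosed_Icc.inter (isClosed_le hf continuous_const)
  have hZbdd : BddBelow Z := ⟨a, fun x hx => hx.1.1⟩
  have hsZ : sInf Z ∈ Z := hZ.csInf_mem ⟨b, ⟨hab, le_rfl⟩, hb⟩ hZbdd
  have has : a < sInf Z :=
    lt_of_le_of_ne hsZ.1.1 fun h => (h ▸ ha).not_ge hsZ.2
  have hpos : ∀ y ∈ Ico a (sInf Z), 0 < f y := fun y hy => by
    by_contra! hy0
    exact (csInf_le hZbdd (show y ∈ Z from ⟨⟨hy.1, hy.2.le.trans hsZ.1.2⟩, hy0⟩)).not_gt hy.2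
  exact ⟨sInf Z, ⟨has, hsZ.1.2⟩, hsZ.2.antisymm (nonneg_of_pos_on_Ico hf has hpos), hpos⟩

theorem pos_on_of_eq_sub_mul {g h : ℝ → ℝ} (hg : Continuous g) (hh : Continuous h)
    (hfgh : ∀ x, f x = g x - x * h x) (hg0 : 0 < g 0)
    (hgh : ∀ s, (∀ y ∈ Icc 0 s, 0 < g y) → ∀ y ∈ Icc 0 s, 0 < h y)
    {t : ℝ} (hf : ∀ y ∈ Icc 0 t, 0 < f y) : ∀ y ∈ Icc 0 t, 0 < g y := by
  intro y hy
  by_contra! hgy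
  obtain ⟨s, hs, hgs, hpos⟩ := exists_first_zero hg hy.1 hg0 hgy
  have hhs : 0 ≤ h s := nonneg_of_pos_on_Ico hh hs.1 fun z hz =>
    hgh z (fun w hw => hpos w ⟨hw.1, hw.2.trans_lt hz.2⟩) z ⟨hz.1, le_rfl⟩
  have hfs := hf s ⟨hs.1.le, hs.2.trans hy.2⟩
  rw [hfgh, hgs] at hfs
  nlinarith [hs.1]

end FirstZero

namespace SimpleGraph

open Finset

variable {V : Type*} (G : SimpleGraph V)

theorem isIndepFinset_insert_iff [DecidableEq V] {v : V} {T : Finset V} :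
    G.IsIndepFinset (insert v T) ↔ G.IsIndepFinset T ∧ ∀ w ∈ T, ¬G.Adj v w := by
  refine ⟨fun h => ⟨fun a ha b hb => h a (mem_insert_of_mem ha) b (mem_insert_of_mem hb),
    fun w hw => h v (mem_insert_self v T) w (mem_insert_of_mem hw)⟩, ?_⟩
  rintro ⟨hT, hv⟩ a ha b hb
  simp only [mem_insert] at ha hb
  rcases ha with rfl | ha <;> rcases hb with rfl | hb
  · exact G.loopless.irrefl _
  · exact hv b hb
  · exact fun hab => hv a ha hab.symm
  · exact hT a ha b hb

open scoped Classical in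
noncomputable def indepEvalOn (A : Finset V) (x : ℝ) : ℝ :=
  ∑ S ∈ A.powerset with G.IsIndepFinset S, (-x) ^ S.card

open scoped Classical

theorem continuous_indepEvalOn (A : Finset V) : Continuous (G.indepEvalOn A) := by
  unfold indepEvalOn
  fun_prop

theorem indepEvalOn_zero (A : Finset V) : G.indepEvalOn A 0 = 1 := by
  rw [indepEvalOn, sum_eq_single_of_mem ∅
    (mem_filter.mpr ⟨empty_mem_powerset A, by simp [IsIndepFinset]⟩)]
  · simp
  · intro S _ hS
    simp [card_ne_zero.mpr (nonempty_iff_ne_empty.mpr hS)]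

theorem indepEvalOn_eq_sub {A : Finset V} {v : V} (hv : v ∈ A) (x : ℝ) :
    G.indepEvalOn A x = G.indepEvalOn (A.erase v) x
      - x * G.indepEvalOn ((A.erase v).filter (¬G.Adj v ·)) x := by
  set N := (A.erase v).filter (¬G.Adj v ·)
  have hinsert : ∀ T ∈ (A.erase v).powerset,
      (if G.IsIndepFinset (insert v T) then (-x) ^ (insert v T).card else 0) =
        if T ⊆ N ∧ G.IsIndepFinset T then -x * (-x) ^ T.card else 0 := by
    intro T hT
    have hvT : v ∉ T := fun h => notMem_erase v A (mem_powerset.mp hT h)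
    have hTN : T ⊆ N ↔ ∀ w ∈ T, ¬G.Adj v w := by
      simp only [N, subset_iff, mem_filter]
      exact ⟨fun h w hw => (h hw).2, fun h w hw => ⟨mem_powerset.mp hT hw, h w hw⟩⟩
    rw [G.isIndepFinset_insert_iff, card_insert_of_notMem hvT, pow_succ']
    simp only [hTN, and_comm]
    congr
  have hfilter : {T ∈ (A.erase v).powerset | T ⊆ N ∧ G.IsIndepFinset T} =
      {T ∈ N.powerset | G.IsIndepFinset T} := by
    ext T
    simp only [mem_filter, mem_powerset]
    exact ⟨fun h => ⟨h.2.1, h.2.2⟩, fun h => ⟨h.1.trans (filter_subset _ _), h⟩⟩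
  rw [indepEvalOn, ← insert_erase hv, sum_filter, sum_powerset_insert (notMem_erase v A),
    sum_congr rfl hinsert, ← sum_filter, ← sum_filter, hfilter, ← mul_sum, insert_erase hv,
    indepEvalOn, indepEvalOn, neg_mul, ← sub_eq_add_neg]

theorem indepEvalOn_empty (x : ℝ) : G.indepEvalOn ∅ x = 1 := by
  rw [indepEvalOn, powerset_empty, sum_filter, sum_singleton]
  simp [IsIndepFinset]

theorem indepEvalOn_singleton (v : V) (x : ℝ) : G.indepEvalOn {v} x = 1 - x := by
  rw [G.indepEvalOn_eq_sub (mem_singleton_self v), erase_singleton, filter_empty,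
    indepEvalOn_empty, mul_one]

theorem indepEvalOn_pos_of_subset {A B : Finset V} (hBA : B ⊆ A) {t : ℝ}
    (hA : ∀ y ∈ Set.Icc 0 t, 0 < G.indepEvalOn A y) : ∀ y ∈ Set.Icc 0 t, 0 < G.indepEvalOn B y := by
  induction A using Finset.strongInduction generalizing B t with
  | H A ih =>
    obtain rfl | hBA' := eq_or_ssubset_of_subset hBA
    · exact hA
    obtain ⟨v, hvA, hvB⟩ := exists_of_ssubset hBA'
    have herase : A.erase v ⊂ A := erase_ssubset hvA
    refine ih _ herase (subset_erase.mpr ⟨hBA, hvB⟩) ?_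
    exact pos_on_of_eq_sub_mul (G.continuous_indepEvalOn _) (G.continuous_indepEvalOn _)
      (G.indepEvalOn_eq_sub hvA) (by rw [indepEvalOn_zero]; exact one_pos)
      (fun s => ih _ herase (filter_subset _ _)) hA

theorem numIndepSets_eq_card [Fintype V] (k : ℕ) :
    numIndepSets G k = #{S : Finset V | G.IsIndepFinset S ∧ #S = k} := by
  rw [numIndepSets, ← Set.ncard_coe_finset]
  congr
  ext S
  simp

theorem eval_indepPoly [Fintype V] (x : ℝ) : (indepPoly G).eval x = G.indepEvalOn univ x := by
  rw [indepPoly, eval_finsetSum, indepEvalOn, powerset_univ,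
    ← sum_fiberwise_of_maps_to' (t := range (Fintype.card V + 1))
      (fun S _ => mem_range.mpr (Nat.lt_succ_of_le (card_le_univ S))) (fun k => (-x) ^ k)]
  refine sum_congr rfl fun k _ => ?_
  rw [filter_filter, sum_const, nsmul_eq_mul, numIndepSets_eq_card, neg_pow]
  simp only [eval_mul, eval_C, eval_pow, eval_X]
  ring

end SimpleGraph

/-- for connected `G`, the independence polynomial `I(G,x)` has a zero in
`(0,1]`. -/
theorem stmt10 {V : Type*} [Fintype V] (G : SimpleGraph V) (hc : G.Connected) :
    ∃ x ∈ Set.Ioc (0 : ℝ) 1, (indepPoly G).eval x = 0 := by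
  obtain ⟨v⟩ := hc.nonempty
  by_contra! hno
  have hpos : ∀ y ∈ Set.Icc 0 1, 0 < G.indepEvalOn Finset.univ y := by
    intro y hy
    by_contra! hle
    obtain ⟨s, hs, hs0, -⟩ := exists_first_zero (G.continuous_indepEvalOn Finset.univ) hy.1
      (by rw [G.indepEvalOn_zero]; exact one_pos) hle
    exact hno s ⟨hs.1, hs.2.trans hy.2⟩ (by rw [G.eval_indepPoly]; exact hs0)
  have hv := G.indepEvalOn_pos_of_subset (Finset.subset_univ {v}) hpos 1 ⟨zero_le_one, le_rfl⟩
  rw [G.indepEvalOn_singleton, sub_self] at hv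
  exact hv.false
end

section
/- Let G be a connected graph and let β(G) be the smallest real zero of I(G,x) in (0,1]. Then β(G) is a simple zero of I(G,x), and every complex zero ξ ≠ β(G) of I(G,x) satisfies |ξ| > β(G). -/
open Polynomial

/-!
Write `Z_S(x) = G.indepSum S x` for the sum of `x ^ |s|` over the independent sets `s ⊆ S`, so
that `I(G[S], y) = Z_S(-y)` and `Z_S(x) = Z_{S - v}(x) + x Z_{S - N[v]}(x)` for `v ∈ S`.
At the first `c ≥ 0` where some `Z_T(-c)` vanishes, all `Z_T(-c)` are nonnegative, so the
recurrence makes `T ↦ Z_T(-c)` antitone and `c` is a zero of `I(G, ·)`. Hence every `Z_T(-·)` is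
positive on `[0, β)`, and connectivity upgrades this to `Z_S(-β) > 0` for every proper `S`.
Simplicity follows from `I'(G, y) = -Σ_v Z_{V - N[v]}(-y)`.
For `|λ| ≤ β`, `λ ≠ -β`, induction on `S` shows that `|Z_S(λ)| / Z_S(-β)` strictly increases
along inclusions; cleared of denominators this survives `S = V`, where `Z_V(-β) = 0`, and so
`Z_V(λ) ≠ 0`. The zeros of `I(G, ·)` are the `-λ` with `Z_V(λ) = 0`.
-/

lemma Complex.one_sub_lt_norm_one_add {b : ℝ} {z : ℂ} (hz : ‖z‖ ≤ b) (hne : z ≠ -b) :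
    1 - b < ‖1 + z‖ := by
  by_contra! h
  have htri : 1 ≤ ‖1 + z‖ + ‖z‖ := by
    simpa using norm_sub_le (1 + z) z
  have hnorm : ‖z‖ = b := by linarith
  have h1 : ‖1 + z‖ ^ 2 ≤ (1 - b) ^ 2 := pow_le_pow_left₀ (norm_nonneg _) h 2
  rw [Complex.sq_norm, Complex.normSq_apply] at h1
  have h2 : z.re * z.re + z.im * z.im = b ^ 2 := by
    rw [← hnorm, Complex.sq_norm, Complex.normSq_apply]
  have hre : -b ≤ z.re := (abs_le.1 ((Complex.abs_re_le_norm z).trans_eq hnorm)).1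
  simp only [Complex.add_re, Complex.one_re, Complex.add_im, Complex.one_im, zero_add] at h1
  have hre' : z.re = -b := by nlinarith
  have him : z.im = 0 := by nlinarith
  exact hne (Complex.ext (by simp [hre']) (by simp [him]))

lemma Continuous.nonneg_of_forall_Ico_nonneg {f : ℝ → ℝ} (hf : Continuous f) {a c : ℝ}
    (hac : a < c) (h : ∀ w ∈ Set.Ico a c, 0 ≤ f w) : 0 ≤ f c := by
  have hsub : closure (Set.Ico a c) ⊆ {w | 0 ≤ f w} :=
    (isClosed_le continuous_const hf).closure_subset_iff.2 h
  rw [closure_Ico hac.ne] at hsub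
  exact hsub ⟨hac.le, le_rfl⟩

namespace SimpleGraph

open Finset
open scoped Classical

variable {V : Type*} (G : SimpleGraph V)

noncomputable def indepSubsets (S : Finset V) : Finset (Finset V) :=
  S.powerset.filter G.IsIndepFinset

noncomputable def indepSum {R : Type*} [CommRing R] (S : Finset V) (x : R) : R :=
  ∑ s ∈ G.indepSubsets S, x ^ s.card

noncomputable def sdiffClosedNbhd (S : Finset V) (v : V) : Finset V :=
  (S.erase v).filter (¬ G.Adj v ·)

variable {G} {R : Type*} [CommRing R] {S : Finset V} {v : V}

lemma mem_indepSubsets {s : Finset V} : s ∈ G.indepSubsets S ↔ s ⊆ S ∧ G.IsIndepFinset s := by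
  simp [indepSubsets]

lemma mem_sdiffClosedNbhd {u : V} :
    u ∈ G.sdiffClosedNbhd S v ↔ u ∈ S ∧ u ≠ v ∧ ¬ G.Adj v u := by
  simp only [sdiffClosedNbhd, mem_filter, mem_erase]
  tauto

lemma sdiffClosedNbhd_subset_erase : G.sdiffClosedNbhd S v ⊆ S.erase v :=
  filter_subset _ _

lemma self_notMem_sdiffClosedNbhd : v ∉ G.sdiffClosedNbhd S v :=
  fun h => (mem_sdiffClosedNbhd.1 h).2.1 rfl

lemma indepSum_empty (x : R) : G.indepSum ∅ x = 1 := by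
  have : G.indepSubsets ∅ = {∅} := by
    ext s
    simp only [mem_indepSubsets, subset_empty, mem_singleton, and_iff_left_iff_imp]
    rintro rfl
    simp [IsIndepFinset]
  simp [indepSum, this]

lemma indepSum_zero (S : Finset V) : G.indepSum S (0 : R) = 1 := by
  have hempty : ∅ ∈ G.indepSubsets S :=
    mem_indepSubsets.2 ⟨empty_subset _, by simp [IsIndepFinset]⟩
  rw [indepSum, sum_eq_single_of_mem ∅ hempty]
  · simp
  · intro s _ hs
    exact zero_pow (card_ne_zero.2 (nonempty_iff_ne_empty.2 hs))

lemma sum_indepSubsets_filter_mem {M : Type*} [AddCommMonoid M] (hv : v ∈ S)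
    (F : Finset V → M) :
    ∑ s ∈ (G.indepSubsets S).filter (v ∈ ·), F s =
      ∑ t ∈ G.indepSubsets (G.sdiffClosedNbhd S v), F (insert v t) := by
  refine sum_nbij' (fun s => s.erase v) (fun t => insert v t) ?_ ?_ ?_ ?_ ?_
  · intro s hs
    rw [mem_filter, mem_indepSubsets] at hs
    obtain ⟨⟨hsS, hs⟩, hvs⟩ := hs
    refine mem_indepSubsets.2 ⟨fun u hu => ?_, fun a ha c hc => hs a (mem_of_mem_erase ha) c
      (mem_of_mem_erase hc)⟩
    obtain ⟨huv, hus⟩ := mem_erase.1 hu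
    exact mem_sdiffClosedNbhd.2 ⟨hsS hus, huv, hs v hvs u hus⟩
  · intro t ht
    obtain ⟨htS, ht⟩ := mem_indepSubsets.1 ht
    have hmem : ∀ {u}, u ∈ t → u ∈ S ∧ u ≠ v ∧ ¬ G.Adj v u :=
      fun hu => mem_sdiffClosedNbhd.1 (htS hu)
    rw [mem_filter, mem_indepSubsets]
    refine ⟨⟨insert_subset hv fun u hu => (hmem hu).1, ?_⟩, mem_insert_self v t⟩
    simp only [IsIndepFinset, mem_insert]
    rintro a (rfl | ha) c (rfl | hc)
    · exact G.irrefl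
    · exact (hmem hc).2.2
    · exact fun h => (hmem ha).2.2 h.symm
    · exact ht a ha c hc
  · intro s hs
    exact insert_erase (mem_filter.1 hs).2
  · intro t ht
    exact erase_insert fun h =>
      self_notMem_sdiffClosedNbhd ((mem_indepSubsets.1 ht).1 h)
  · intro s hs
    rw [insert_erase (mem_filter.1 hs).2]

lemma indepSum_eq_erase_add (hv : v ∈ S) (x : R) :
    G.indepSum S x = G.indepSum (S.erase v) x + x * G.indepSum (G.sdiffClosedNbhd S v) x := by
  rw [indepSum, ← sum_filter_not_add_sum_filter (G.indepSubsets S) (v ∈ ·),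
    sum_indepSubsets_filter_mem hv, indepSum, indepSum, mul_sum]
  congr 1
  · refine sum_congr ?_ fun _ _ => rfl
    ext s
    simp only [mem_filter, mem_indepSubsets, subset_erase]
    tauto
  · refine sum_congr rfl fun t ht => ?_
    have hvt : v ∉ t := fun h => self_notMem_sdiffClosedNbhd ((mem_indepSubsets.1 ht).1 h)
    rw [card_insert_of_notMem hvt, pow_succ']

lemma continuous_indepSum_neg (S : Finset V) : Continuous fun y : ℝ => G.indepSum S (-y) :=
  continuous_finsetSum _ fun _ _ => continuous_neg.pow _

lemma indepSum_le_erase {c : ℝ} (hc : 0 ≤ c) (hv : v ∈ S)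
    (hnonneg : 0 ≤ G.indepSum (G.sdiffClosedNbhd S v) (-c)) :
    G.indepSum S (-c) ≤ G.indepSum (S.erase v) (-c) := by
  rw [indepSum_eq_erase_add hv]
  nlinarith

lemma indepSum_anti {c : ℝ} (hc : 0 ≤ c) (hnonneg : ∀ T : Finset V, 0 ≤ G.indepSum T (-c))
    {T : Finset V} (hTS : T ⊆ S) : G.indepSum S (-c) ≤ G.indepSum T (-c) := by
  induction S using Finset.strongInduction with
  | H S ih =>
    rcases hTS.eq_or_ssubset with rfl | hTS
    · rfl
    obtain ⟨v, hvS, hvT⟩ := exists_of_ssubset hTS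
    calc G.indepSum S (-c) ≤ G.indepSum (S.erase v) (-c) := indepSum_le_erase hc hvS (hnonneg _)
      _ ≤ G.indepSum T (-c) := ih _ (erase_ssubset hvS) (subset_erase.2 ⟨hTS.subset, hvT⟩)

section Polynomial

open Polynomial

variable [Fintype V]

lemma eval₂_indepPoly (φ : ℝ →+* R) (x : R) :
    (indepPoly G).eval₂ φ x = G.indepSum univ (-x) := by
  have hcount (k : ℕ) :
      numIndepSets G k = ((G.indepSubsets univ).filter (·.card = k)).card := by
    rw [numIndepSets, ← Set.ncard_coe_finset]
    congr 1
    ext s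
    simp [mem_indepSubsets]
  rw [indepPoly, eval₂_finsetSum, indepSum, ← sum_fiberwise_of_maps_to
    (g := card) (t := range (Fintype.card V + 1)) fun s _ => by
      simpa [Nat.lt_succ_iff] using card_le_univ s]
  refine sum_congr rfl fun k _ => ?_
  rw [sum_congr rfl fun s hs => by rw [(mem_filter.1 hs).2], sum_const, nsmul_eq_mul, ← hcount,
    eval₂_mul, eval₂_C, eval₂_X_pow, map_mul, map_pow, map_neg, map_one, map_natCast, neg_pow x k]
  ring

lemma eval_indepPoly_s11 (y : ℝ) : (indepPoly G).eval y = G.indepSum univ (-y) :=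
  eval₂_indepPoly _ y

lemma aeval_indepPoly (z : ℂ) : aeval z (indepPoly G) = G.indepSum univ (-z) :=
  eval₂_indepPoly _ z

end Polynomial

section Beta

variable [Fintype V] {b : ℝ}

lemma indepSum_pos_of_lt_beta (hb : IsBetaZero (indepPoly G) b) (T : Finset V) {z : ℝ}
    (hz : z ∈ Set.Ico 0 b) : 0 < G.indepSum T (-z) := by
  by_contra! hle
  set A := Set.Icc 0 b ∩ ⋃ T : Finset V, {y | G.indepSum T (-y) ≤ 0}
  have hA : IsCompact A := isCompact_Icc.inter_right <|
    isClosed_iUnion_of_finite fun T => isClosed_le (continuous_indepSum_neg T) continuous_const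
  obtain ⟨c, ⟨⟨hc0, hcb⟩, hcA⟩, hcmin⟩ :=
    hA.exists_isLeast ⟨z, ⟨hz.1, hz.2.le⟩, Set.mem_iUnion.2 ⟨T, hle⟩⟩
  obtain ⟨T₀, hT₀⟩ := Set.mem_iUnion.1 hcA
  have hc_pos : 0 < c := hc0.lt_of_ne fun h => by
    norm_num [← h, indepSum_zero] at hT₀
  have hpos_before (T : Finset V) : ∀ w ∈ Set.Ico 0 c, 0 < G.indepSum T (-w) :=
    fun w hw => lt_of_not_ge fun h =>
      (hcmin ⟨⟨hw.1, hw.2.le.trans hcb⟩, Set.mem_iUnion.2 ⟨T, h⟩⟩).not_gt hw.2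
  have hnonneg (T : Finset V) : 0 ≤ G.indepSum T (-c) :=
    (continuous_indepSum_neg T).nonneg_of_forall_Ico_nonneg hc_pos fun w hw =>
      (hpos_before T w hw).le
  have hroot : (indepPoly G).eval c = 0 := by
    rw [eval_indepPoly_s11]
    exact le_antisymm ((indepSum_anti hc0 hnonneg (subset_univ T₀)).trans hT₀) (hnonneg univ)
  have hbc := hb.2.2 c ⟨hc_pos, hcb.trans hb.1.2⟩ hroot
  exact (hcmin ⟨⟨hz.1, hz.2.le⟩, Set.mem_iUnion.2 ⟨T, hle⟩⟩).not_gt (hz.2.trans_le hbc)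

lemma indepSum_nonneg_beta (hb : IsBetaZero (indepPoly G) b) (T : Finset V) :
    0 ≤ G.indepSum T (-b) :=
  (continuous_indepSum_neg T).nonneg_of_forall_Ico_nonneg hb.1.1 fun _ hw =>
    (indepSum_pos_of_lt_beta hb T hw).le

lemma indepSum_pos_beta (hb : IsBetaZero (indepPoly G) b) (hc : G.Connected) (hv : v ∉ S) :
    0 < G.indepSum S (-b) := by
  induction S using Finset.strongInduction with
  | H S ih =>
    rcases S.eq_empty_or_nonempty with rfl | ⟨w, hw⟩
    · simp [indepSum_empty]
    refine (indepSum_nonneg_beta hb S).lt_of_ne' fun hS => ?_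
    obtain ⟨d, -, hdS, hdS'⟩ :=
      (hc.preconnected w v).some.exists_boundary_dart (S : Set V) hw hv
    set u := d.snd
    -- `0 ≤ Z_{S ∪ {u}}(-β) = -β Z_{S - N[u]}(-β)`, and `S - N[u]` misses the neighbour `d.fst`
    have hsub : G.sdiffClosedNbhd (insert u S) u ⊂ S := by
      refine Finset.ssubset_iff_subset_ne.2 ⟨fun x hx => ?_, fun h => ?_⟩
      · obtain ⟨hx, hxu, -⟩ := mem_sdiffClosedNbhd.1 hx
        exact (mem_insert.1 hx).resolve_left hxu
      · have := h ▸ (mem_coe.1 hdS)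
        exact (mem_sdiffClosedNbhd.1 this).2.2 d.adj.symm
    have hrec := G.indepSum_eq_erase_add (mem_insert_self u S) (-b)
    rw [erase_insert hdS', hS] at hrec
    have hR := ih _ hsub fun h => hv (hsub.subset h)
    nlinarith [indepSum_nonneg_beta hb (insert u S), hb.1.1]

end Beta

section Derivative

open Polynomial

variable [Fintype V]

lemma sum_indepSubsets_card_mul_pow (x : R) :
    ∑ s ∈ G.indepSubsets univ, (s.card : R) * x ^ (s.card - 1) =
      ∑ v, G.indepSum (G.sdiffClosedNbhd univ v) x := by
  calc ∑ s ∈ G.indepSubsets univ, (s.card : R) * x ^ (s.card - 1)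
      = ∑ s ∈ G.indepSubsets univ, ∑ _v ∈ s, x ^ (s.card - 1) := by
        simp only [sum_const, nsmul_eq_mul]
    _ = ∑ v, ∑ s ∈ (G.indepSubsets univ).filter (v ∈ ·), x ^ (s.card - 1) :=
        sum_comm' fun _ _ => by simp
    _ = ∑ v, G.indepSum (G.sdiffClosedNbhd univ v) x := by
        refine sum_congr rfl fun v _ => ?_
        rw [sum_indepSubsets_filter_mem (mem_univ v), indepSum]
        refine sum_congr rfl fun t ht => ?_
        have hvt : v ∉ t := fun h => self_notMem_sdiffClosedNbhd ((mem_indepSubsets.1 ht).1 h)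
        rw [card_insert_of_notMem hvt, Nat.add_sub_cancel]

lemma eval_derivative_indepPoly (y : ℝ) :
    (derivative (indepPoly G)).eval y = -∑ v, G.indepSum (G.sdiffClosedNbhd univ v) (-y) := by
  have hderiv : HasDerivAt (fun y : ℝ => G.indepSum univ (-y))
      (∑ s ∈ G.indepSubsets univ, (s.card : ℝ) * (-y) ^ (s.card - 1) * -1) y :=
    HasDerivAt.fun_sum fun s _ => (hasDerivAt_neg y).pow s.card
  rw [← sum_mul, sum_indepSubsets_card_mul_pow, mul_neg_one] at hderiv
  refine (Polynomial.hasDerivAt _ y).unique ?_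
  simpa only [eval_indepPoly_s11] using hderiv

lemma rootMultiplicity_indepPoly_beta {b : ℝ} (hb : IsBetaZero (indepPoly G) b)
    (hc : G.Connected) : (indepPoly G).rootMultiplicity b = 1 := by
  have hne : indepPoly G ≠ 0 := fun h => by
    simpa [h, indepSum_zero] using eval_indepPoly_s11 (G := G) 0
  have hpos := (rootMultiplicity_pos hne).2 hb.2.1
  have hderiv : (derivative (indepPoly G)).eval b < 0 := by
    have := hc.nonempty
    rw [eval_derivative_indepPoly, neg_lt_zero]
    exact sum_pos (fun _ _ => indepSum_pos_beta hb hc self_notMem_sdiffClosedNbhd)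
      univ_nonempty
  have : ¬ 1 < (indepPoly G).rootMultiplicity b := fun h =>
    hderiv.ne ((one_lt_rootMultiplicity_iff_isRoot hne).1 h).2
  omega

end Derivative

section Complex

variable [Fintype V] {b : ℝ} {z : ℂ}

lemma indepSum_ratio_erase_lt (hb : IsBetaZero (indepPoly G) b) (hc : G.Connected)
    (hz : ‖z‖ ≤ b) (hne : z ≠ -b) (hv : v ∈ S)
    (ih : ∀ T ⊂ S.erase v, G.indepSum (S.erase v) (-b) * ‖G.indepSum T z‖ <
      G.indepSum T (-b) * ‖G.indepSum (S.erase v) z‖) :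
    G.indepSum S (-b) * ‖G.indepSum (S.erase v) z‖ <
      G.indepSum (S.erase v) (-b) * ‖G.indepSum S z‖ := by
  have hS' : 0 < G.indepSum (S.erase v) (-b) := indepSum_pos_beta hb hc (notMem_erase v S)
  have hrecC := G.indepSum_eq_erase_add hv z
  have hrecR := G.indepSum_eq_erase_add hv (-b)
  rcases sdiffClosedNbhd_subset_erase.eq_or_ssubset with hTS | hTS
  -- `v` has no neighbour in `S`, so `Z_S = (1 + z) Z_{S - v}`
  · have hnorm : G.indepSum (S.erase v) (-b) ≤ ‖G.indepSum (S.erase v) z‖ := by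
      rcases (empty_subset (S.erase v)).eq_or_ssubset with h | h
      · simp [← h, indepSum_empty]
      · simpa [indepSum_empty] using (ih ∅ h).le
    rw [hTS, ← one_add_mul] at hrecC
    rw [hTS] at hrecR
    rw [hrecC, hrecR, norm_mul]
    have := Complex.one_sub_lt_norm_one_add hz hne
    have := mul_pos hS' (hS'.trans_le hnorm)
    nlinarith
  · have htri : ‖G.indepSum (S.erase v) z‖ - b * ‖G.indepSum (G.sdiffClosedNbhd S v) z‖ ≤
        ‖G.indepSum S z‖ := by
      rw [hrecC]
      calc ‖G.indepSum (S.erase v) z‖ - b * ‖G.indepSum (G.sdiffClosedNbhd S v) z‖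
          ≤ ‖G.indepSum (S.erase v) z‖ - ‖z * G.indepSum (G.sdiffClosedNbhd S v) z‖ := by
            rw [norm_mul]; gcongr
        _ ≤ _ := norm_sub_le_norm_add _ _
    rw [hrecR]
    nlinarith [mul_lt_mul_of_pos_left (ih _ hTS) hb.1.1, mul_le_mul_of_nonneg_left htri hS'.le]

lemma indepSum_ratio_lt (hb : IsBetaZero (indepPoly G) b) (hc : G.Connected)
    (hz : ‖z‖ ≤ b) (hne : z ≠ -b) {T : Finset V} (hTS : T ⊂ S) :
    G.indepSum S (-b) * ‖G.indepSum T z‖ < G.indepSum T (-b) * ‖G.indepSum S z‖ := by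
  induction S using Finset.strongInduction generalizing T with
  | H S ih =>
    obtain ⟨w, hwS, hwT⟩ := exists_of_ssubset hTS
    have hstep := indepSum_ratio_erase_lt hb hc hz hne hwS fun _ h => ih _ (erase_ssubset hwS) h
    rcases (subset_erase.2 ⟨hTS.subset, hwT⟩).eq_or_ssubset with rfl | hT
    · exact hstep
    have hS' : 0 < G.indepSum (S.erase w) (-b) := indepSum_pos_beta hb hc (notMem_erase w S)
    have hT' : 0 < G.indepSum T (-b) := indepSum_pos_beta hb hc hwT
    refine lt_of_mul_lt_mul_left ?_ hS'.le
    calc G.indepSum (S.erase w) (-b) * (G.indepSum S (-b) * ‖G.indepSum T z‖)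
        = G.indepSum S (-b) * (G.indepSum (S.erase w) (-b) * ‖G.indepSum T z‖) := by ring
      _ ≤ G.indepSum S (-b) * (G.indepSum T (-b) * ‖G.indepSum (S.erase w) z‖) :=
        mul_le_mul_of_nonneg_left (ih _ (erase_ssubset hwS) hT).le (indepSum_nonneg_beta hb S)
      _ = G.indepSum T (-b) * (G.indepSum S (-b) * ‖G.indepSum (S.erase w) z‖) := by ring
      _ < G.indepSum T (-b) * (G.indepSum (S.erase w) (-b) * ‖G.indepSum S z‖) :=
        mul_lt_mul_of_pos_left hstep hT'
      _ = G.indepSum (S.erase w) (-b) * (G.indepSum T (-b) * ‖G.indepSum S z‖) := by ring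

lemma beta_lt_norm_of_aeval_indepPoly_eq_zero (hb : IsBetaZero (indepPoly G) b)
    (hc : G.Connected) {ξ : ℂ} (hξ : Polynomial.aeval ξ (indepPoly G) = 0) (hne : ξ ≠ b) :
    b < ‖ξ‖ := by
  by_contra! h
  have := hc.nonempty
  have key := indepSum_ratio_lt hb hc (z := -ξ) (by rwa [norm_neg]) (neg_injective.ne hne)
    (empty_ssubset.2 (univ_nonempty (α := V)))
  rw [← eval_indepPoly_s11, hb.2.1, ← aeval_indepPoly, hξ] at key
  simp at key

end Complex

end SimpleGraph

/-- for connected `G`, the smallest zero `β(G)` of `I(G,x)` in `(0,1]`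
is a simple zero, and every other complex zero `ξ` satisfies `|ξ| > β(G)`. -/
theorem stmt11 {V : Type*} [Fintype V] (G : SimpleGraph V) (hc : G.Connected)
    (b : ℝ) (hb : IsBetaZero (indepPoly G) b) :
    (indepPoly G).rootMultiplicity b = 1 ∧
      ∀ ξ : ℂ, Polynomial.aeval ξ (indepPoly G) = 0 → ξ ≠ (b : ℂ) →
        b < ‖ξ‖ :=
  ⟨G.rootMultiplicity_indepPoly_beta hb hc,
    fun _ => G.beta_lt_norm_of_aeval_indepPoly_eq_zero hb hc⟩
end
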